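/- A function F : F_{2^n} → F_{2^n} is an o-polynomial if and only if both: (i) Σ_{b ∈ F_{2^n}^*} Σ_{v ∈ F_{2^n}} W_F(bv,v)^2 = (2^n − 1)·2^{2n+1}, and (ii) Σ_{b ∈ F_{2^n}^*} Σ_{v_1,v_2 ∈ F_{2^n}} W_F(b v_1, v_1)·W_F(b v_2, v_2)·W_F(b(v_1+v_2), v_1+v_2) = (2^n − 1)·2^{3n+2}. -/

import Mathlib

/-! Write `N_b(a)` for the number of solutions of `F x + b x = a`. Then `W_F(bv, v)` is the
Fourier transform of `N_b` at `v` for the pairing `(v, a) ↦ (-1)^tr(v a)`, so Parseval and its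
triple analogue turn the two Walsh sums into `2^n Σ_b Σ_a N_b(a)²` and `4^n Σ_b Σ_a N_b(a)³`.
As `Σ_a N_b(a) = 2^n`, the two conditions together say `Σ_b Σ_a N_b(a) (N_b(a) - 2)² = 0`, a sum
of nonnegative terms that vanishes exactly when every `N_b(a)` is `0` or `2`. -/

open scoped Classical
open Finset

noncomputable instance (n : ℕ) : Fintype (GaloisField 2 n) := Fintype.ofFinite _

/-- The absolute trace from `GF(2^n)` to `GF(2)`. -/
noncomputable def tr (n : ℕ) (x : GaloisField 2 n) : ZMod 2 :=
  Algebra.trace (ZMod 2) (GaloisField 2 n) x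

/-- The Walsh transform of `F` at `(u, v)`. -/
noncomputable def W (n : ℕ) (F : GaloisField 2 n → GaloisField 2 n)
    (u v : GaloisField 2 n) : ℤ :=
  ∑ x : GaloisField 2 n, (-1 : ℤ) ^ (tr n (v * F x) + tr n (u * x)).val

/-- `F` is an o-polynomial: for every nonzero `b` and every `a`, the equation
`F x + b * x = a` has 0 or 2 solutions. -/
def IsOPoly (n : ℕ) (F : GaloisField 2 n → GaloisField 2 n) : Prop :=
  ∀ b : GaloisField 2 n, b ≠ 0 → ∀ a : GaloisField 2 n,
    Nat.card {x : GaloisField 2 n // F x + b * x = a} = 0 ∨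
    Nat.card {x : GaloisField 2 n // F x + b * x = a} = 2

namespace AddChar

variable {R C : Type*} [CommRing R] [Fintype R] [CommRing C] {ψ : AddChar R C}

noncomputable def transform (ψ : AddChar R C) (f : R → C) (v : R) : C :=
  ∑ a, f a * ψ (v * a)

theorem sum_apply_mul_eq_transform_card {ι : Type*} [Fintype ι] (G : ι → R) (v : R) :
    ∑ x, ψ (v * G x) = ψ.transform (fun a => (Nat.card {x // G x = a} : C)) v := by
  classical
  rw [← Fintype.sum_fiberwise' G (fun a => ψ (v * a))]
  simp only [transform, sum_const, card_univ, Nat.card_eq_fintype_card, nsmul_eq_mul]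

theorem transform_mul_transform_neg (f g : R → C) (v : R) :
    ψ.transform f v * ψ.transform g (-v) = ∑ a, ∑ b, f a * g b * ψ (v * (a - b)) := by
  rw [transform, transform, sum_mul_sum]
  refine sum_congr rfl fun a _ => sum_congr rfl fun b _ => ?_
  rw [mul_sub, sub_eq_add_neg, map_add_eq_mul, ← neg_mul]
  ring

theorem transform_neg_add (f : R → C) (v w : R) :
    ψ.transform f (-(v + w)) = ψ.transform (fun a => f a * ψ (-v * a)) (-w) := by
  refine sum_congr rfl fun a _ => ?_
  rw [mul_assoc, ← map_add_eq_mul]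
  ring_nf

variable [IsDomain C]

theorem sum_transform_mul_transform_neg (hψ : ψ.IsPrimitive) (f g : R → C) :
    ∑ v, ψ.transform f v * ψ.transform g (-v) = Fintype.card R * ∑ a, f a * g a := by
  classical
  calc ∑ v, ψ.transform f v * ψ.transform g (-v)
      = ∑ a, ∑ b, f a * g b * ∑ v, ψ (v * (a - b)) := by
        simp only [transform_mul_transform_neg, mul_sum]
        rw [sum_comm]
        exact sum_congr rfl fun a _ => sum_comm
    _ = Fintype.card R * ∑ a, f a * g a := by
        simp only [sum_mulShift _ hψ, sub_eq_zero, Nat.cast_ite, Nat.cast_zero, mul_ite,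
          mul_zero, sum_ite_eq, mem_univ, if_true, mul_sum]
        exact sum_congr rfl fun a _ => by ring

/-- Triple correlation is Parseval applied twice: first in `w`, to the twisted function
`a ↦ h a * ψ (-v * a)`, then in `v`. -/
theorem sum_transform_mul_transform_mul_transform_neg_add (hψ : ψ.IsPrimitive) (f g h : R → C) :
    ∑ v, ∑ w, ψ.transform f v * ψ.transform g w * ψ.transform h (-(v + w)) =
      Fintype.card R ^ 2 * ∑ a, f a * g a * h a := by
  calc ∑ v, ∑ w, ψ.transform f v * ψ.transform g w * ψ.transform h (-(v + w))
      = ∑ v, ψ.transform f v * (Fintype.card R * ψ.transform (fun a => g a * h a) (-v)) := by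
        refine sum_congr rfl fun v _ => ?_
        simp only [transform_neg_add, mul_assoc, ← mul_sum, sum_transform_mul_transform_neg hψ]
        simp only [transform, mul_sum, mul_assoc]
    _ = Fintype.card R ^ 2 * ∑ a, f a * g a * h a := by
        simp only [mul_left_comm _ (Fintype.card R : C), ← mul_sum,
          sum_transform_mul_transform_neg hψ, mul_assoc]
        ring

end AddChar

theorem sum_natCard_fiber_eq_card {ι κ : Type*} [Fintype ι] [Fintype κ] (G : ι → κ) :
    ∑ a, Nat.card {x // G x = a} = Fintype.card ι := by
  classical
  simp only [Nat.card_eq_fintype_card, ← Fintype.card_sigma,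
    Fintype.card_congr (Equiv.sigmaFiberEquiv G)]

/-- The `m(m - 2)²` are nonnegative, and their total is a combination of the three moments
that vanishes exactly under the two moment conditions. -/
theorem forall_eq_zero_or_eq_two_iff_sum_sq_and_sum_cube {κ ι : Type*} [Fintype ι]
    (s : Finset κ) (N : κ → ι → ℕ) (q : ℕ) (hN : ∀ k ∈ s, ∑ i, N k i = q) :
    (∀ k ∈ s, ∀ i, N k i = 0 ∨ N k i = 2) ↔
      ∑ k ∈ s, ∑ i, (N k i : ℤ) ^ 2 = 2 * (q * #s) ∧
        ∑ k ∈ s, ∑ i, (N k i : ℤ) ^ 3 = 4 * (q * #s) := by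
  have hlin : ∑ k ∈ s, ∑ i, (N k i : ℤ) = q * #s := by
    rw [sum_congr rfl fun k hk => by rw [← Nat.cast_sum, hN k hk], sum_const, nsmul_eq_mul,
      mul_comm]
  have hdefect : ∀ m : ℕ, (m = 0 ∨ m = 2) ↔ (m : ℤ) * (m - 2) ^ 2 = 0 := by
    intro m
    rw [mul_eq_zero, pow_eq_zero_iff two_ne_zero, sub_eq_zero]
    norm_cast
  constructor
  · intro h
    rw [← hlin, mul_sum, mul_sum]
    constructor <;>
      refine sum_congr rfl fun k hk => ?_ <;> rw [mul_sum] <;>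
      refine sum_congr rfl fun i _ => ?_ <;>
      rcases h k hk i with hi | hi <;> simp [hi]
  · rintro ⟨h2, h3⟩ k hk i
    have hnonneg : ∀ k i, 0 ≤ (N k i : ℤ) * (N k i - 2) ^ 2 := fun k i => by positivity
    have htotal : ∑ k ∈ s, ∑ i, (N k i : ℤ) * (N k i - 2) ^ 2 = 0 := by
      calc ∑ k ∈ s, ∑ i, (N k i : ℤ) * (N k i - 2) ^ 2
          = ∑ k ∈ s, ∑ i, (N k i : ℤ) ^ 3 - 4 * ∑ k ∈ s, ∑ i, (N k i : ℤ) ^ 2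
              + 4 * ∑ k ∈ s, ∑ i, (N k i : ℤ) := by
            simp only [mul_sum, ← sum_sub_distrib, ← sum_add_distrib]
            exact sum_congr rfl fun k _ => sum_congr rfl fun i _ => by ring
        _ = 0 := by rw [h2, h3, hlin]; ring
    rw [sum_eq_zero_iff_of_nonneg fun k _ => sum_nonneg fun i _ => hnonneg k i] at htotal
    rw [hdefect]
    exact (sum_eq_zero_iff_of_nonneg fun i _ => hnonneg k i).mp (htotal k hk) i (mem_univ i)

noncomputable def traceChar (n : ℕ) : AddChar (GaloisField 2 n) ℤ :=
  (AddChar.zmodChar 2 (by norm_num : (-1 : ℤ) ^ 2 = 1)).compAddMonoidHom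
    (Algebra.trace (ZMod 2) (GaloisField 2 n)).toAddMonoidHom

theorem traceChar_apply (n : ℕ) (x : GaloisField 2 n) : traceChar n x = (-1) ^ (tr n x).val :=
  rfl

theorem traceChar_isPrimitive (n : ℕ) : (traceChar n).IsPrimitive := by
  refine AddChar.IsPrimitive.of_ne_one (AddChar.ne_one_iff.mpr ?_)
  obtain ⟨a, ha⟩ := Algebra.trace_surjective (ZMod 2) (GaloisField 2 n) 1
  exact ⟨a, by rw [traceChar_apply, tr, ha]; decide⟩

theorem W_mul_eq_transform (n : ℕ) (F : GaloisField 2 n → GaloisField 2 n)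
    (b v : GaloisField 2 n) :
    W n F (b * v) v =
      (traceChar n).transform (fun a => (Nat.card {x // F x + b * x = a} : ℤ)) v := by
  rw [← AddChar.sum_apply_mul_eq_transform_card]
  refine sum_congr rfl fun x _ => ?_
  rw [traceChar_apply, show v * (F x + b * x) = v * F x + b * v * x by ring]
  unfold tr
  rw [map_add]

theorem card_galoisField_two (n : ℕ) (hn : 0 < n) : Fintype.card (GaloisField 2 n) = 2 ^ n := by
  rw [← Nat.card_eq_fintype_card]
  exact GaloisField.card 2 n hn.ne'

theorem sum_W_sq (n : ℕ) (hn : 0 < n) (F : GaloisField 2 n → GaloisField 2 n)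
    (b : GaloisField 2 n) :
    ∑ v, W n F (b * v) v ^ 2 = 2 ^ n * ∑ a, (Nat.card {x // F x + b * x = a} : ℤ) ^ 2 := by
  have h := (traceChar n).sum_transform_mul_transform_neg (traceChar_isPrimitive n)
    (fun a => (Nat.card {x // F x + b * x = a} : ℤ)) (fun a => Nat.card {x // F x + b * x = a})
  simp only [CharTwo.neg_eq, ← W_mul_eq_transform, card_galoisField_two n hn,
    Nat.cast_pow, Nat.cast_ofNat] at h
  simpa only [sq] using h

theorem sum_W_mul_W_mul_W (n : ℕ) (hn : 0 < n) (F : GaloisField 2 n → GaloisField 2 n)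
    (b : GaloisField 2 n) :
    ∑ v₁, ∑ v₂, W n F (b * v₁) v₁ * W n F (b * v₂) v₂ * W n F (b * (v₁ + v₂)) (v₁ + v₂) =
      (2 ^ n) ^ 2 * ∑ a, (Nat.card {x // F x + b * x = a} : ℤ) ^ 3 := by
  have h := (traceChar n).sum_transform_mul_transform_mul_transform_neg_add
    (traceChar_isPrimitive n) (fun a => (Nat.card {x // F x + b * x = a} : ℤ))
    (fun a => Nat.card {x // F x + b * x = a}) (fun a => Nat.card {x // F x + b * x = a})
  simp only [CharTwo.neg_eq, ← W_mul_eq_transform, card_galoisField_two n hn,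
    Nat.cast_pow, Nat.cast_ofNat] at h
  simpa only [pow_three, mul_assoc] using h

theorem o_polynomial_iff_walsh_moments (n : ℕ) (hn : 0 < n)
    (F : GaloisField 2 n → GaloisField 2 n) :
    IsOPoly n F ↔
      (∑ b ∈ univ.filter (fun b : GaloisField 2 n => b ≠ 0),
          ∑ v : GaloisField 2 n, W n F (b * v) v ^ 2 =
        ((2 : ℤ) ^ n - 1) * 2 ^ (2 * n + 1)) ∧
      (∑ b ∈ univ.filter (fun b : GaloisField 2 n => b ≠ 0),
          ∑ v₁ : GaloisField 2 n, ∑ v₂ : GaloisField 2 n,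
            W n F (b * v₁) v₁ * W n F (b * v₂) v₂ * W n F (b * (v₁ + v₂)) (v₁ + v₂) =
        ((2 : ℤ) ^ n - 1) * 2 ^ (3 * n + 2)) := by
  have hunits : #(univ.filter (fun b : GaloisField 2 n => b ≠ 0)) = 2 ^ n - 1 := by
    rw [filter_ne' univ 0, card_erase_of_mem (mem_univ 0), card_univ, card_galoisField_two n hn]
  have hq : (2 : ℤ) ^ n ≠ 0 := by positivity
  have hopoly : IsOPoly n F ↔ ∀ b ∈ univ.filter (fun b : GaloisField 2 n => b ≠ 0), ∀ a,
      Nat.card {x // F x + b * x = a} = 0 ∨ Nat.card {x // F x + b * x = a} = 2 := by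
    simp only [IsOPoly, mem_filter, mem_univ, true_and]
  rw [hopoly, forall_eq_zero_or_eq_two_iff_sum_sq_and_sum_cube _ _ (2 ^ n)
    fun b _ => by rw [sum_natCard_fiber_eq_card, card_galoisField_two n hn]]
  simp only [sum_W_sq n hn, sum_W_mul_W_mul_W n hn, ← mul_sum, hunits]
  push_cast [Nat.one_le_two_pow]
  rw [← mul_right_inj' hq, ← mul_right_inj' (pow_ne_zero 2 hq) (b := ∑ b ∈ _, _)]
  refine and_congr ?_ ?_ <;> constructor <;> intro h <;> linear_combination h
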